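/- Let W be a dual Banach space, X ⊆ Y subspaces of W, and suppose Y admits a Lebesgue decomposition relative to W with decomposition operator L. If for every ψ ∈ Y* vanishing on X both Lψ and (I−L)ψ vanish on X, then X admits a Lebesgue decomposition that is compatible with that of Y, i.e. for any ψ ∈ Y*, (Lψ)|_X is the absolutely continuous part of ψ|_X and ((I−L)ψ)|_X is the singular part of ψ|_X. -/

import Mathlib

namespace NormedSpace

/-- The old `NormedSpace.Dual` (removed from Mathlib; `StrongDual` replaces it but only
asks for `[TopologicalSpace E] [AddCommMonoid E] [Module 𝕜 E]`). -/
abbrev Dual (𝕜 : Type*) [NontriviallyNormedField 𝕜] (E : Type*) [SeminormedAddCommGroup E]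
    [NormedSpace 𝕜 E] : Type _ :=
  E →L[𝕜] 𝕜

end NormedSpace

open NormedSpace Filter Topology

def WeakStarContinuous {V : Type*} [NormedAddCommGroup V] [NormedSpace ℂ V]
    (Φ : Dual ℂ V → ℂ) : Prop :=
  Continuous fun w : WeakDual ℂ V => Φ (WeakDual.toStrongDual w)

def ACset {V : Type*} [NormedAddCommGroup V] [NormedSpace ℂ V]
    (X : Subspace ℂ (Dual ℂ V)) : Set (Dual ℂ ↥X) :=
  {φ | ∃ Φ : Dual ℂ V →ₗ[ℂ] ℂ, WeakStarContinuous Φ ∧ ∀ x : ↥X, Φ (x : Dual ℂ V) = φ x}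

def IsLebesgueDecomposition {V : Type*} [NormedAddCommGroup V] [NormedSpace ℂ V]
    (X : Subspace ℂ (Dual ℂ V)) (L : Dual ℂ ↥X →L[ℂ] Dual ℂ ↥X) : Prop :=
  (∀ φ, L (L φ) = L φ) ∧ Set.range L = ACset X ∧
    ∀ φ : Dual ℂ ↥X, ‖φ‖ = ‖L φ‖ + ‖φ - L φ‖

/-- The continuous inclusion of `X` into `Y` for nested subspaces. -/
noncomputable def inclCLM {V : Type*} [NormedAddCommGroup V] [NormedSpace ℂ V]
    {X Y : Subspace ℂ (Dual ℂ V)} (h : X ≤ Y) : ↥X →L[ℂ] ↥Y :=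
  LinearMap.mkContinuous (E := ↥X) (F := ↥Y) (Submodule.inclusion h) 1 (fun x => by
    rw [one_mul]; exact le_of_eq (by rfl))

/-! Restriction `ψ ↦ ψ|_X` maps `Y*` onto `X*`, and by Hahn–Banach every `φ ∈ X*` is the
restriction of some `ψ ∈ Y*` with `‖ψ‖ = ‖φ‖`. The hypothesis says that `L` preserves the kernel
of restriction, so `L` descends to an operator `L'` on `X*` with `L' (ψ|_X) = (L ψ)|_X`.
Idempotence and the range `AC(X) = AC(Y)|_X` pass through the surjection, and since restriction
is contractive, `‖L' φ‖ + ‖φ - L' φ‖ ≤ ‖L ψ‖ + ‖ψ - L ψ‖ = ‖ψ‖ = ‖φ‖` for a norm-preserving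
lift `ψ` of `φ`. -/

namespace ContinuousLinearMap

variable {𝕜 E F : Type*} [NontriviallyNormedField 𝕜] [SeminormedAddCommGroup E] [NormedSpace 𝕜 E]
  [SeminormedAddCommGroup F] [NormedSpace 𝕜 F] {R : E →L[𝕜] F}

theorem exists_comp_eq_comp_of_ker_le (hlift : ∀ φ, ∃ e, R e = φ ∧ ‖e‖ ≤ ‖φ‖)
    (T : E →L[𝕜] E) (hT : ∀ e, R e = 0 → R (T e) = 0) :
    ∃ T' : F →L[𝕜] F, T'.comp R = R.comp T := by
  have hR : Function.Surjective R := fun φ => (hlift φ).imp fun _ => And.left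
  let T₀ : F →ₗ[𝕜] F :=
    (LinearMap.ker (R : E →ₗ[𝕜] F)).liftQ ((R : E →ₗ[𝕜] F) ∘ₗ (T : E →ₗ[𝕜] E)) (fun e => hT e) ∘ₗ
      (LinearMap.quotKerEquivOfSurjective (R : E →ₗ[𝕜] F) hR).symm.toLinearMap
  have hT₀ (e : E) : T₀ (R e) = R (T e) := by
    have h := LinearMap.quotKerEquivOfSurjective_symm_apply (R : E →ₗ[𝕜] F) hR e
    rw [coe_coe] at h
    simp only [T₀, LinearMap.comp_apply, LinearEquiv.coe_coe, h]
    rfl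
  refine ⟨T₀.mkContinuous (‖R‖ * ‖T‖) fun φ => ?_, ext hT₀⟩
  obtain ⟨e, rfl, he⟩ := hlift φ
  calc ‖T₀ (R e)‖ = ‖R (T e)‖ := by rw [hT₀]
    _ ≤ ‖R‖ * ‖T‖ * ‖e‖ := by rw [mul_assoc]; exact R.le_opNorm_of_le (T.le_opNorm e)
    _ ≤ ‖R‖ * ‖T‖ * ‖R e‖ := by gcongr

variable {T : E →L[𝕜] E} {T' : F →L[𝕜] F}

theorem idempotent_of_comp_eq_comp (hR : Function.Surjective R) (h : T'.comp R = R.comp T)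
    (hT : ∀ e, T (T e) = T e) (φ : F) : T' (T' φ) = T' φ := by
  obtain ⟨e, rfl⟩ := hR φ
  have h' (e : E) : T' (R e) = R (T e) := congr($h e)
  rw [h', h', hT]

theorem range_eq_image_range_of_comp_eq_comp (hR : Function.Surjective R)
    (h : T'.comp R = R.comp T) : Set.range T' = R '' Set.range T := by
  rw [← Set.range_comp, ← coe_comp, ← h, coe_comp, Set.range_comp, hR.range_eq, Set.image_univ]

theorem norm_eq_add_norm_sub_of_comp_eq_comp (hR : ∀ e, ‖R e‖ ≤ ‖e‖)
    (hlift : ∀ φ, ∃ e, R e = φ ∧ ‖e‖ ≤ ‖φ‖) (h : T'.comp R = R.comp T)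
    (hT : ∀ e, ‖e‖ = ‖T e‖ + ‖e - T e‖) (φ : F) : ‖φ‖ = ‖T' φ‖ + ‖φ - T' φ‖ := by
  refine le_antisymm (norm_le_norm_add_norm_sub' _ _) ?_
  obtain ⟨e, rfl, he⟩ := hlift φ
  have h' : T' (R e) = R (T e) := congr($h e)
  calc ‖T' (R e)‖ + ‖R e - T' (R e)‖ = ‖R (T e)‖ + ‖R (e - T e)‖ := by rw [h', map_sub]
    _ ≤ ‖T e‖ + ‖e - T e‖ := add_le_add (hR _) (hR _)
    _ = ‖e‖ := (hT e).symm
    _ ≤ ‖R e‖ := he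

end ContinuousLinearMap

theorem LinearIsometry.exists_extension_norm_eq {𝕜 A B : Type*} [NontriviallyNormedField 𝕜]
    [IsRCLikeNormedField 𝕜] [NormedAddCommGroup A] [NormedSpace 𝕜 A]
    [NormedAddCommGroup B] [NormedSpace 𝕜 B] (j : A →ₗᵢ[𝕜] B) (φ : Dual 𝕜 A) :
    ∃ ψ : Dual 𝕜 B, ψ.comp j.toContinuousLinearMap = φ ∧ ‖ψ‖ = ‖φ‖ := by
  let e := j.equivRange
  obtain ⟨ψ, hψ, hnorm⟩ := _root_.exists_extension_norm_eq (LinearMap.range j.toLinearMap)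
    (φ.comp (e.symm : LinearMap.range j.toLinearMap →L[𝕜] A))
  refine ⟨ψ, ContinuousLinearMap.ext fun a => by simpa [e] using hψ (e a), ?_⟩
  rw [hnorm]
  exact φ.opNorm_comp_linearIsometryEquiv e.symm

theorem WeakStarContinuous.continuous {V : Type*} [NormedAddCommGroup V] [NormedSpace ℂ V]
    {Φ : Dual ℂ V → ℂ} (hΦ : WeakStarContinuous Φ) : Continuous Φ :=
  hΦ.comp NormedSpace.Dual.toWeakDual_continuous

section Restriction

variable {V : Type*} [NormedAddCommGroup V] [NormedSpace ℂ V] {X Y : Subspace ℂ (Dual ℂ V)}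

noncomputable def inclIsometry (hXY : X ≤ Y) : ↥X →ₗᵢ[ℂ] ↥Y :=
  ⟨Submodule.inclusion hXY, fun _ => rfl⟩

theorem norm_comp_inclCLM_le (hXY : X ≤ Y) (ψ : Dual ℂ ↥Y) :
    ‖(ψ.comp (inclCLM hXY) : Dual ℂ ↥X)‖ ≤ ‖ψ‖ :=
  ContinuousLinearMap.opNorm_le_bound _ (norm_nonneg ψ) fun x => ψ.le_opNorm (inclCLM hXY x)

noncomputable def restrictDual (hXY : X ≤ Y) : Dual ℂ ↥Y →L[ℂ] Dual ℂ ↥X :=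
  LinearMap.mkContinuous
    { toFun := fun ψ => ψ.comp (inclCLM hXY)
      map_add' := fun _ _ => ContinuousLinearMap.add_comp _ _ _
      map_smul' := fun _ _ => ContinuousLinearMap.smul_comp _ _ _ }
    1 fun ψ => (norm_comp_inclCLM_le hXY ψ).trans_eq (one_mul _).symm

theorem restrictDual_apply (hXY : X ≤ Y) (ψ : Dual ℂ ↥Y) :
    restrictDual hXY ψ = ψ.comp (inclCLM hXY) := rfl

theorem norm_restrictDual_apply_le (hXY : X ≤ Y) (ψ : Dual ℂ ↥Y) :
    ‖restrictDual hXY ψ‖ ≤ ‖ψ‖ := by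
  rw [restrictDual_apply]
  exact norm_comp_inclCLM_le hXY ψ

theorem exists_restrictDual_eq (hXY : X ≤ Y) (φ : Dual ℂ ↥X) :
    ∃ ψ, restrictDual hXY ψ = φ ∧ ‖ψ‖ ≤ ‖φ‖ := by
  obtain ⟨ψ, hψ, hnorm⟩ :=
    LinearIsometry.exists_extension_norm_eq (𝕜 := ℂ) (A := ↥X) (B := ↥Y) (inclIsometry hXY) φ
  exact ⟨ψ, hψ, hnorm.le⟩

theorem image_restrictDual_ACset (hXY : X ≤ Y) : restrictDual hXY '' ACset Y = ACset X := by
  apply Set.Subset.antisymm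
  · rintro _ ⟨ψ, ⟨Φ, hΦ, hΦψ⟩, rfl⟩
    exact ⟨Φ, hΦ, fun x => hΦψ (inclCLM hXY x)⟩
  · rintro φ ⟨Φ, hΦ, hΦφ⟩
    let ψ : Dual ℂ ↥Y := ⟨Φ ∘ₗ Y.subtype, hΦ.continuous.comp continuous_subtype_val⟩
    exact ⟨ψ, ⟨Φ, hΦ, fun _ => rfl⟩, ContinuousLinearMap.ext hΦφ⟩

end Restriction

/-- if for every `ψ ∈ Y*` vanishing on `X` both `Lψ` and `(I-L)ψ` vanish
on `X`, then `X` admits a Lebesgue decomposition compatible with that of `Y`: the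
restriction to `X` of the absolutely continuous (resp. singular) part of any `ψ ∈ Y*`
is the absolutely continuous (resp. singular) part of `ψ|_X`. -/
theorem stmt3 {V : Type*} [NormedAddCommGroup V] [NormedSpace ℂ V]
    {X Y : Subspace ℂ (Dual ℂ V)} (hXY : X ≤ Y)
    (L : Dual ℂ ↥Y →L[ℂ] Dual ℂ ↥Y) (hL : IsLebesgueDecomposition Y L)
    (hvanish : ∀ ψ : Dual ℂ ↥Y, (∀ x : ↥X, ψ (inclCLM hXY x) = 0) →
      (∀ x : ↥X, (L ψ) (inclCLM hXY x) = 0) ∧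
      (∀ x : ↥X, (ψ - L ψ) (inclCLM hXY x) = 0)) :
    ∃ L' : Dual ℂ ↥X →L[ℂ] Dual ℂ ↥X, IsLebesgueDecomposition X L' ∧
      ∀ ψ : Dual ℂ ↥Y,
        L' (ψ.comp (inclCLM hXY)) = (L ψ).comp (inclCLM hXY) ∧
        (ψ.comp (inclCLM hXY) : Dual ℂ ↥X) - L' (ψ.comp (inclCLM hXY))
          = (ψ - L ψ).comp (inclCLM hXY) := by
  obtain ⟨hidem, hrange, hnorm⟩ := hL
  have hlift := exists_restrictDual_eq hXY
  have hsurj : Function.Surjective (restrictDual hXY) := fun φ => (hlift φ).imp fun _ => And.left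
  obtain ⟨L', hL'⟩ := ContinuousLinearMap.exists_comp_eq_comp_of_ker_le hlift L fun ψ hψ =>
    ContinuousLinearMap.ext (hvanish ψ fun x => congr($hψ x)).1
  have hcompat (ψ : Dual ℂ ↥Y) : L' (ψ.comp (inclCLM hXY)) = (L ψ).comp (inclCLM hXY) :=
    congr($hL' ψ)
  refine ⟨L', ⟨?_, ?_, ?_⟩, fun ψ => ⟨hcompat ψ, ?_⟩⟩
  · exact ContinuousLinearMap.idempotent_of_comp_eq_comp hsurj hL' hidem
  · rw [ContinuousLinearMap.range_eq_image_range_of_comp_eq_comp hsurj hL', hrange,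
      image_restrictDual_ACset]
  · exact ContinuousLinearMap.norm_eq_add_norm_sub_of_comp_eq_comp
      (norm_restrictDual_apply_le hXY) hlift hL' hnorm
  · rw [hcompat]
    exact (map_sub (restrictDual hXY) ψ (L ψ)).symm
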